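/- For any banana tree G of genus g, we have gon(G) ≤ ⌊(g+3)/2⌋. -/

import Mathlib

open Finset

attribute [local instance] Classical.propDecidable

noncomputable section

/-- A finite loopless multigraph on vertex type `V`, given by a symmetric
edge-multiplicity function: `mul u v` is the number of edges joining `u` and `v`. -/
structure Multigraph (V : Type) [Fintype V] where
  mul : V → V → ℕ
  symm : ∀ u v, mul u v = mul v u
  loopless : ∀ v, mul v v = 0

namespace Multigraph

variable {V : Type} [Fintype V]

/-- The underlying simple graph of a multigraph. -/
def underlying (G : Multigraph V) : SimpleGraph V where
  Adj u v := 0 < G.mul u v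
  symm := by
    constructor
    intro u v h
    change 0 < G.mul u v at h
    change 0 < G.mul v u
    rwa [G.symm] at h
  loopless := by
    constructor
    intro v h
    simp [G.loopless] at h

/-- A multigraph is connected if its underlying simple graph is. -/
def Connected (G : Multigraph V) : Prop := G.underlying.Connected

/-- A banana tree is a multigraph whose underlying simple graph is a tree. -/
def IsBananaTree (G : Multigraph V) : Prop := G.underlying.IsTree

/-- The valence (degree) of a vertex. -/
def valence (G : Multigraph V) (v : V) : ℕ := ∑ w, G.mul v w

/-- The number of edges of a multigraph. -/
def edgeCount (G : Multigraph V) : ℕ := (∑ u, ∑ v, G.mul u v) / 2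

/-- The genus (first Betti number) `|E| - |V| + 1` of a connected multigraph. -/
def genus (G : Multigraph V) : ℕ := G.edgeCount + 1 - Fintype.card V

/-- The degree of a divisor: the total number of chips. -/
def degree (D : V → ℤ) : ℤ := ∑ v, D v

/-- A divisor is effective if it is nonnegative everywhere. -/
def Effective (D : V → ℤ) : Prop := ∀ v, 0 ≤ D v

/-- Linear equivalence of divisors: `D'` is obtained from `D` by a finite sequence of
chip-firing moves, equivalently (for connected graphs) via an integral firing script `σ`. -/
def LinEquiv (G : Multigraph V) (D D' : V → ℤ) : Prop :=
  ∃ σ : V → ℤ, ∀ v, D' v = D v + ∑ w, (G.mul v w : ℤ) * (σ w - σ v)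

/-- A divisor has positive rank if for every vertex `v` it is linearly equivalent to an
effective divisor placing at least one chip on `v`. -/
def PosRank (G : Multigraph V) (D : V → ℤ) : Prop :=
  ∀ v, ∃ D', G.LinEquiv D D' ∧ Effective D' ∧ 1 ≤ D' v

/-- The (divisorial) gonality: the minimum degree of a positive-rank effective divisor. -/
def gonality (G : Multigraph V) : ℕ :=
  sInf {d : ℕ | ∃ D : V → ℤ, Effective D ∧ G.PosRank D ∧ degree D = (d : ℤ)}

/-- `f(G, v, k)`: the minimum degree of an effective divisor `D` on `G` such that
`D + k·v` has positive rank. -/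
def fmin (G : Multigraph V) (v : V) (k : ℕ) : ℕ :=
  sInf {d : ℕ | ∃ D : V → ℤ, Effective D ∧
    G.PosRank (fun u => D u + if u = v then (k : ℤ) else 0) ∧ degree D = (d : ℤ)}

/-- Delete a vertex from a multigraph. -/
def deleteVertex (G : Multigraph V) (v : V) : Multigraph {u : V // u ≠ v} where
  mul a b := G.mul a.1 b.1
  symm := fun a b => G.symm a.1 b.1
  loopless := fun a => G.loopless a.1

/-- Delete one single edge between `u` and `w` (if any) from a multigraph. -/
def deleteOneEdge (G : Multigraph V) (u w : V) : Multigraph V where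
  mul x y := if (x = u ∧ y = w) ∨ (x = w ∧ y = u) then G.mul x y - 1 else G.mul x y
  symm := by
    intro x y
    by_cases h : (x = u ∧ y = w) ∨ (x = w ∧ y = u)
    · have h' : (y = u ∧ x = w) ∨ (y = w ∧ x = u) := by tauto
      simp [h, h', G.symm x y]
    · have h' : ¬((y = u ∧ x = w) ∨ (y = w ∧ x = u)) := by tauto
      simp [h, h', G.symm x y]
  loopless := by
    intro v
    by_cases h : (v = u ∧ v = w) ∨ (v = w ∧ v = u)
    · simp [h, G.loopless]
    · simp [h, G.loopless]

/-- The adjacency move from `v` to `w` on a banana tree: the subset-firing move at the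
connected component of `v` after removing the `v`-`w` edge bunch.  Its net effect is to
move `|E(v,w)|` chips from `v` to `w`. -/
def adjMove (G : Multigraph V) (v w : V) (D : V → ℤ) : V → ℤ :=
  fun u => if u = v then D u - (G.mul v w : ℤ)
    else if u = w then D u + (G.mul v w : ℤ) else D u

/-- A single legal adjacency move: both divisors are effective and the second is
obtained from the first by an adjacency move between adjacent vertices. -/
def LegalAdjStep (G : Multigraph V) (D D' : V → ℤ) : Prop :=
  ∃ v w, G.underlying.Adj v w ∧ Effective D ∧ Effective D' ∧ D' = G.adjMove v w D

/-- A scramble: a collection of nonempty vertex sets (eggs), each inducing a connected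
subgraph. -/
def IsScramble (G : Multigraph V) (S : Finset (Finset V)) : Prop :=
  ∀ X ∈ S, X.Nonempty ∧ (G.underlying.induce (X : Set V)).Connected

/-- A hitting set of a scramble: a set of vertices meeting every egg. -/
def IsHittingSet (S : Finset (Finset V)) (T : Finset V) : Prop :=
  ∀ X ∈ S, (X ∩ T).Nonempty

/-- The hitting number of a scramble. -/
def hittingNumber (S : Finset (Finset V)) : ℕ∞ :=
  sInf {t : ℕ∞ | ∃ T : Finset V, IsHittingSet S T ∧ (T.card : ℕ∞) = t}

/-- The simple graph remaining after removing `c u w` of the edges of each bunch. -/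
def cutGraph (G : Multigraph V) (c : V → V → ℕ) : SimpleGraph V where
  Adj u w := u ≠ w ∧ c u w < G.mul u w ∧ c w u < G.mul w u
  symm := ⟨fun u w h => ⟨h.1.symm, h.2.2, h.2.1⟩⟩
  loopless := ⟨fun u h => h.1 rfl⟩

/-- `c` describes an egg-cut of the scramble `S`: a set of edges of `G` (given by the
number `c u w` of edges removed from each bunch) whose removal leaves at least two
connected components each completely containing an egg. -/
def IsEggCut (G : Multigraph V) (S : Finset (Finset V)) (c : V → V → ℕ) : Prop :=
  (∀ u w, c u w = c w u) ∧ (∀ u w, c u w ≤ G.mul u w) ∧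
  ∃ X₁ ∈ S, ∃ X₂ ∈ S,
    (∀ x ∈ X₁, ∀ y ∈ X₁, (G.cutGraph c).Reachable x y) ∧
    (∀ x ∈ X₂, ∀ y ∈ X₂, (G.cutGraph c).Reachable x y) ∧
    (∀ x ∈ X₁, ∀ y ∈ X₂, ¬ (G.cutGraph c).Reachable x y)

/-- The egg-cut number of a scramble (`⊤` if no egg-cut exists). -/
def eggCutNumber (G : Multigraph V) (S : Finset (Finset V)) : ℕ∞ :=
  sInf {t : ℕ∞ | ∃ c : V → V → ℕ, G.IsEggCut S c ∧
    ((∑ u, ∑ w, c u w : ℕ) : ℕ∞) = 2 * t}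

/-- The order of a scramble: the minimum of its hitting number and egg-cut number. -/
def scrambleOrder (G : Multigraph V) (S : Finset (Finset V)) : ℕ∞ :=
  min (hittingNumber S) (G.eggCutNumber S)

/-- The scramble number of a multigraph: the maximum order of a scramble on it. -/
def scrambleNumber (G : Multigraph V) : ℕ∞ :=
  sSup {m : ℕ∞ | ∃ S : Finset (Finset V), G.IsScramble S ∧ G.scrambleOrder S = m}

/-- The weight of a node `t` in a tree-cut decomposition `(T, X)`: the number of vertices
mapped to `t` plus the number of edges routed through `t` with neither endpoint mapped
to `t`. -/
def nodeWeight (G : Multigraph V) {N : Type} [Fintype N] (T : SimpleGraph N)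
    (X : V → N) (t : N) : ℕ :=
  (Finset.univ.filter fun v => X v = t).card +
    (∑ u, ∑ w, if X u ≠ t ∧ X w ≠ t ∧
        ¬ (T.deleteEdges {e | t ∈ e}).Reachable (X u) (X w)
      then G.mul u w else 0) / 2

/-- The weight of a link `pq` in a tree-cut decomposition `(T, X)`: the number of edges
of `G` routed through that link. -/
def linkWeight (G : Multigraph V) {N : Type} (T : SimpleGraph N)
    (X : V → N) (p q : N) : ℕ :=
  (∑ u, ∑ w, if ¬ (T.deleteEdges {s(p, q)}).Reachable (X u) (X w)
    then G.mul u w else 0) / 2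

/-- The width of a tree-cut decomposition `(T, X)`: the maximum of all node and link
weights. -/
def tcdWidth (G : Multigraph V) {N : Type} [Fintype N] (T : SimpleGraph N)
    (X : V → N) : ℕ :=
  max (Finset.univ.sup fun t => G.nodeWeight T X t)
      (Finset.univ.sup fun p : N × N =>
        if T.Adj p.1 p.2 then G.linkWeight T X p.1 p.2 else 0)

/-- The screewidth of a multigraph: the minimum width of a tree-cut decomposition. -/
def screewidth (G : Multigraph V) : ℕ :=
  sInf {w : ℕ | ∃ (m : ℕ) (T : SimpleGraph (Fin m)), T.IsTree ∧
    ∃ X : V → Fin m, G.tcdWidth T X = w}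

/-- The banana path on `n+1` vertices `v_0, …, v_n`, with `a i` edges joining
`v_i` and `v_{i+1}` (for `0 ≤ i < n`). -/
def bananaPath (n : ℕ) (a : ℕ → ℕ) : Multigraph (Fin (n + 1)) where
  mul i j := if i.val + 1 = j.val then a i.val else if j.val + 1 = i.val then a j.val else 0
  symm := by
    intro u v
    try dsimp only
    split_ifs <;> first | rfl | (exfalso; omega)
  loopless := by
    intro v
    have h : ¬ (v.val + 1 = v.val) := by omega
    simp [h]

/-- The banana star with central vertex `Sum.inl ()` and, for each `i : Fin k`,
`r i` leaves joined to the center by `a i` parallel edges. -/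
def bananaStar (k : ℕ) (a r : Fin k → ℕ) :
    Multigraph (Unit ⊕ (Σ i : Fin k, Fin (r i))) where
  mul x y :=
    match x, y with
    | Sum.inl _, Sum.inr ⟨i, _⟩ => a i
    | Sum.inr ⟨i, _⟩, Sum.inl _ => a i
    | _, _ => 0
  symm := by
    intro u v
    rcases u with u | ⟨i, li⟩ <;> rcases v with v | ⟨j, lj⟩ <;> rfl
  loopless := by
    intro v
    rcases v with v | ⟨i, li⟩ <;> rfl

end Multigraph

/-!
Call `Y : V → ℕ` a demand and say that a divisor `D` satisfies it if, for every vertex `x`,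
`D` is equivalent to an effective divisor with at least `Y x` chips on `x`. On a banana tree of
genus `g`, every demand is satisfied by an effective divisor `D` with
`2 deg D ≤ g + 3 + ∑ x, (2 Y x - 3)⁺`; the constant demand `1` gives the theorem.

This is proved by removing a pendant vertex `u` attached to `w` by a bunch of `m` edges. If `u`
demands `r` chips, keep `c` chips on `u` and raise the demand at `w` to `m t`: un-firing `u` `t`
times then moves `m t` chips across the bunch. One can always choose `r ≤ c + m t` with
`2 c + (2 m t - 3)⁺ ≤ m - 1 + (2 r - 3)⁺`, so the cost is paid by the `m - 1` cycles of the
bunch.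
-/

namespace Multigraph

variable {V : Type}

def extendAt (u : V) (k : ℤ) (D : {x // x ≠ u} → ℤ) : V → ℤ :=
  fun x => if hx : x = u then k else D ⟨x, hx⟩

@[simp]
theorem extendAt_self (u : V) (k : ℤ) (D : {x // x ≠ u} → ℤ) : extendAt u k D u = k :=
  dif_pos rfl

@[simp]
theorem extendAt_val {u : V} (k : ℤ) (D : {x // x ≠ u} → ℤ) (x : {x // x ≠ u}) :
    extendAt u k D x = D x :=
  dif_neg x.2

theorem extendAt_of_ne {u x : V} {k : ℤ} {D : {x // x ≠ u} → ℤ} (hx : x ≠ u) :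
    extendAt u k D x = D ⟨x, hx⟩ :=
  dif_neg hx

theorem Effective.extendAt {u : V} {k : ℤ} {D : {x // x ≠ u} → ℤ} (hk : 0 ≤ k)
    (hD : Effective D) : Effective (extendAt u k D) := by
  intro x
  by_cases hx : x = u
  · simp [hx, hk]
  · simpa [extendAt_of_ne hx] using hD ⟨x, hx⟩

variable [Fintype V]

theorem degree_extendAt (u : V) (k : ℤ) (D : {x // x ≠ u} → ℤ) :
    degree (extendAt u k D) = k + degree D := by
  simp [degree, Fintype.sum_eq_add_sum_subtype_ne _ u]

theorem LinEquiv.refl (G : Multigraph V) (D : V → ℤ) : G.LinEquiv D D :=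
  ⟨0, by simp⟩

theorem LinEquiv.trans {G : Multigraph V} {D₁ D₂ D₃ : V → ℤ} (h₁₂ : G.LinEquiv D₁ D₂)
    (h₂₃ : G.LinEquiv D₂ D₃) : G.LinEquiv D₁ D₃ := by
  obtain ⟨σ, hσ⟩ := h₁₂
  obtain ⟨τ, hτ⟩ := h₂₃
  refine ⟨σ + τ, fun v => ?_⟩
  simp only [hτ v, hσ v, Pi.add_apply, add_assoc, ← Finset.sum_add_distrib]
  congr 2; ext; ring

theorem gonality_le_toNat_degree (G : Multigraph V) {D : V → ℤ} (hD : Effective D)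
    (hrank : G.PosRank D) : G.gonality ≤ (degree D).toNat :=
  Nat.sInf_le ⟨D, hD, hrank, (Int.toNat_of_nonneg (Finset.sum_nonneg fun x _ => hD x)).symm⟩

def demandWeight (r : ℕ) : ℕ := 2 * r - 3

theorem demandWeight_max_le (a b : ℕ) :
    demandWeight (max a b) ≤ demandWeight a + demandWeight b := by
  unfold demandWeight; omega

theorem exists_pendant_supply {m : ℕ} (hm : 0 < m) (r : ℕ) :
    ∃ c t : ℕ, r ≤ c + m * t ∧ 2 * c + demandWeight (m * t) + 1 ≤ m + demandWeight r := by
  unfold demandWeight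
  -- Move `m ⌊r / m⌋` chips and keep `r % m`; for `r < m` keep all `r` chips, except for
  -- `(m, r) = (2, 1), (3, 2)`, where moving a full bunch of `m` chips is cheaper.
  by_cases hrm : m ≤ r
  · refine ⟨r % m, r / m, by rw [Nat.mod_add_div], ?_⟩
    have := Nat.mod_add_div r m
    have := Nat.mod_lt r hm
    have : m ≤ m * (r / m) := Nat.le_mul_of_pos_right m ((Nat.one_le_div_iff hm).mpr hrm)
    omega
  · by_cases hsmall : r + 1 = m ∧ m ≤ 3
    · exact ⟨0, 1, by omega, by omega⟩
    · exact ⟨r, 0, by omega, by omega⟩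

def SatisfiesDemand (G : Multigraph V) (D : V → ℤ) (Y : V → ℕ) : Prop :=
  ∀ x, ∃ E, G.LinEquiv D E ∧ Effective E ∧ (Y x : ℤ) ≤ E x

theorem SatisfiesDemand.posRank {G : Multigraph V} {D : V → ℤ} (h : G.SatisfiesDemand D 1) :
    G.PosRank D := by
  simpa [SatisfiesDemand, PosRank] using h

/-- For connected `G` of genus `g`, this is `g + 3 + ∑ x, (2 Y x - 3)⁺`. -/
def demandBudget (G : Multigraph V) (Y : V → ℕ) : ℤ :=
  G.edgeCount - Fintype.card V + 4 + ∑ x, (demandWeight (Y x) : ℤ)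

def CanSupply (G : Multigraph V) (Y : V → ℕ) : Prop :=
  ∃ D, Effective D ∧ G.SatisfiesDemand D Y ∧ 2 * degree D ≤ G.demandBudget Y

theorem demandBudget_sup_single_le [DecidableEq V] (G : Multigraph V) (Y : V → ℕ) (x₀ : V)
    (T : ℕ) : G.demandBudget (Y ⊔ Pi.single x₀ T) ≤ G.demandBudget Y + demandWeight T := by
  have hsingle : ∑ x, demandWeight ((Pi.single x₀ T : V → ℕ) x) = demandWeight T :=
    (Finset.sum_eq_single x₀ (fun x _ hx => by simp [hx, demandWeight]) (by simp)).trans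
      (by simp)
  have hsum : ∑ x, demandWeight ((Y ⊔ Pi.single x₀ T) x) ≤
      ∑ x, demandWeight (Y x) + demandWeight T := by
    rw [← hsingle, ← Finset.sum_add_distrib]
    exact Finset.sum_le_sum fun x _ => demandWeight_max_le _ _
  have hsum' : (∑ x, (demandWeight ((Y ⊔ Pi.single x₀ T) x) : ℤ)) ≤
      ∑ x, (demandWeight (Y x) : ℤ) + demandWeight T := by
    exact_mod_cast hsum
  unfold demandBudget
  linarith

theorem canSupply_of_subsingleton [Subsingleton V] (G : Multigraph V) (Y : V → ℕ) :
    G.CanSupply Y := by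
  refine ⟨fun x => Y x, fun x => by positivity,
    fun x => ⟨_, LinEquiv.refl G _, fun x => by positivity, le_rfl⟩, ?_⟩
  have hmul (x y : V) : G.mul x y = 0 := Subsingleton.elim x y ▸ G.loopless x
  have hedge : G.edgeCount = 0 := by simp [edgeCount, hmul]
  have hcard : Fintype.card V ≤ 1 := Fintype.card_le_one_iff_subsingleton.mpr ‹_›
  have hsum : 2 * degree (fun x => (Y x : ℤ)) ≤
      ∑ x, (3 + (demandWeight (Y x) : ℤ)) := by
    rw [degree, Finset.mul_sum]
    exact Finset.sum_le_sum fun x _ => by unfold demandWeight; omega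
  rw [Finset.sum_add_distrib, Finset.sum_const, Finset.card_univ, nsmul_eq_mul] at hsum
  unfold demandBudget
  rw [hedge]
  push_cast
  nlinarith

def IsPendant (G : Multigraph V) (u w : V) : Prop := ∀ z, 0 < G.mul u z ↔ z = w

namespace IsPendant

variable {G : Multigraph V} {u w : V}

theorem mul_pos (h : G.IsPendant u w) : 0 < G.mul u w := (h w).2 rfl

theorem ne (h : G.IsPendant u w) : u ≠ w := by
  rintro rfl
  simpa [G.loopless] using h.mul_pos

theorem mul_eq_zero (h : G.IsPendant u w) {z : V} (hz : z ≠ w) : G.mul u z = 0 := by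
  simpa [Nat.pos_iff_ne_zero] using mt (h z).1 hz

theorem mul_eq_zero' (h : G.IsPendant u w) {z : V} (hz : z ≠ w) : G.mul z u = 0 := by
  rw [G.symm, h.mul_eq_zero hz]

theorem valence_eq (h : G.IsPendant u w) : G.valence u = G.mul u w :=
  Finset.sum_eq_single w (fun _ _ hz => h.mul_eq_zero hz) (by simp)

theorem edgeCount_eq (h : G.IsPendant u w) :
    G.edgeCount = (G.deleteVertex u).edgeCount + G.mul u w := by
  have hcol : ∑ x : {x // x ≠ u}, G.mul x u = G.mul u w := by
    simpa [valence, Fintype.sum_eq_add_sum_subtype_ne _ u, G.loopless, G.symm u] using h.valence_eq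
  have hrow : ∑ y : {y // y ≠ u}, G.mul u y = G.mul u w := by
    simpa [valence, Fintype.sum_eq_add_sum_subtype_ne _ u, G.loopless] using h.valence_eq
  simp only [edgeCount, deleteVertex, Fintype.sum_eq_add_sum_subtype_ne _ u,
    Finset.sum_add_distrib, hcol, hrow, G.loopless]
  omega

theorem demandBudget_eq (h : G.IsPendant u w) (Y : V → ℕ) : G.demandBudget Y =
    (G.deleteVertex u).demandBudget (fun x => Y x) + G.mul u w - 1 + demandWeight (Y u) := by
  have hcard : Fintype.card {x // x ≠ u} + 1 = Fintype.card V := by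
    have := Fintype.card_pos_iff.mpr ⟨u⟩
    simp only [ne_eq, Fintype.card_subtype_compl, Fintype.card_unique]
    omega
  unfold demandBudget
  rw [h.edgeCount_eq, Fintype.sum_eq_add_sum_subtype_ne _ u, ← hcard]
  push_cast
  ring

theorem linEquiv_extendAt (h : G.IsPendant u w) (k : ℤ) {D E : {x // x ≠ u} → ℤ}
    (hDE : (G.deleteVertex u).LinEquiv D E) : G.LinEquiv (extendAt u k D) (extendAt u k E) := by
  obtain ⟨σ, hσ⟩ := hDE
  set w' : {x // x ≠ u} := ⟨w, h.ne.symm⟩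
  -- Giving `u` the script value of `w` makes the bunch between them inert.
  refine ⟨extendAt u (σ w') σ, fun x => ?_⟩
  by_cases hx : x = u
  · subst hx
    have hpendant : ∑ y, (G.mul x y : ℤ) * (extendAt x (σ w') σ y - σ w') = 0 := by
      rw [Finset.sum_eq_single w (fun y _ hy => by simp [h.mul_eq_zero hy]) (by simp)]
      simp [extendAt_of_ne h.ne.symm, w']
    simp [hpendant]
  · have hbunch : (G.mul x u : ℤ) * (σ w' - σ ⟨x, hx⟩) = 0 := by
      by_cases hxw : x = w
      · subst hxw; simp [w']
      · simp [h.mul_eq_zero' hxw]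
    simpa [extendAt_of_ne hx, Fintype.sum_eq_add_sum_subtype_ne _ u, hbunch, deleteVertex]
      using hσ ⟨x, hx⟩

theorem linEquiv_add_single_sub_single (h : G.IsPendant u w) (E : V → ℤ) (t : ℤ) :
    G.LinEquiv E (E + Pi.single u (G.mul u w * t) - Pi.single w (G.mul u w * t)) := by
  refine ⟨Pi.single u (-t), fun x => ?_⟩
  by_cases hx : x = u
  · subst hx
    rw [Finset.sum_eq_single w (fun y _ hy => by simp [h.mul_eq_zero hy]) (by simp)]
    simp [h.ne, h.ne.symm]
  · rw [Finset.sum_eq_single u (fun y _ hy => by simp [hy, hx]) (by simp)]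
    by_cases hxw : x = w
    · subst hxw; simp [hx, G.symm x u]; ring
    · simp [hx, hxw, h.mul_eq_zero' hxw]

theorem satisfiesDemand_extendAt (h : G.IsPendant u w) {Y : V → ℕ} {D : {x // x ≠ u} → ℤ}
    {c t : ℕ} (hsupply : Y u ≤ c + G.mul u w * t)
    (hD : (G.deleteVertex u).SatisfiesDemand D
      ((fun x => Y x) ⊔ Pi.single ⟨w, h.ne.symm⟩ (G.mul u w * t))) :
    G.SatisfiesDemand (extendAt u c D) Y := by
  intro x
  by_cases hx : x = u
  · subst hx
    set T : ℤ := G.mul x w * t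
    obtain ⟨E, hDE, hE, hEw⟩ := hD ⟨w, h.ne.symm⟩
    have hTw : T ≤ E ⟨w, h.ne.symm⟩ := le_trans (by simp [T]) hEw
    refine ⟨extendAt x c E + Pi.single x T - Pi.single w T,
      (h.linEquiv_extendAt c hDE).trans (h.linEquiv_add_single_sub_single _ t), fun y => ?_, ?_⟩
    · by_cases hyx : y = x
      · subst hyx; simp [h.ne, T]; positivity
      · by_cases hyw : y = w
        · subst hyw; simpa [extendAt_of_ne hyx, hyx] using hTw
        · simpa [extendAt_of_ne hyx, hyx, hyw] using hE ⟨y, hyx⟩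
    · simp [h.ne, T]; exact_mod_cast hsupply
  · obtain ⟨E, hDE, hE, hEx⟩ := hD ⟨x, hx⟩
    refine ⟨extendAt u c E, h.linEquiv_extendAt c hDE, hE.extendAt (by positivity), ?_⟩
    rw [extendAt_of_ne hx]
    exact le_trans (by simp) hEx

theorem canSupply (h : G.IsPendant u w) (hdel : ∀ Y, (G.deleteVertex u).CanSupply Y)
    (Y : V → ℕ) : G.CanSupply Y := by
  obtain ⟨c, t, hsupply, hcost⟩ := exists_pendant_supply h.mul_pos (Y u)
  obtain ⟨D, hDeff, hD, hDdeg⟩ :=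
    hdel ((fun x => Y x) ⊔ Pi.single ⟨w, h.ne.symm⟩ (G.mul u w * t))
  refine ⟨extendAt u c D, hDeff.extendAt (by positivity), h.satisfiesDemand_extendAt hsupply hD,
    ?_⟩
  have hbudget := (G.deleteVertex u).demandBudget_sup_single_le (fun x => Y x) ⟨w, h.ne.symm⟩
    (G.mul u w * t)
  have hcost' : (2 * c + demandWeight (G.mul u w * t) + 1 : ℤ) ≤
      G.mul u w + demandWeight (Y u) := by
    exact_mod_cast hcost
  rw [degree_extendAt, h.demandBudget_eq]
  linarith

end IsPendant

theorem IsBananaTree.exists_isPendant [Nontrivial V] {G : Multigraph V} (hG : G.IsBananaTree) :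
    ∃ u w, G.IsPendant u w ∧ (G.deleteVertex u).IsBananaTree := by
  obtain ⟨u, hu⟩ := hG.exists_vert_degree_one_of_nontrivial
  obtain ⟨w, hadj, hw⟩ := SimpleGraph.degree_eq_one_iff_existsUnique_adj.mp hu
  refine ⟨u, w, fun z => ⟨hw z, fun hz => hz ▸ hadj⟩, ?_, ?_⟩
  · exact hG.connected.induce_compl_singleton_of_degree_eq_one hu
  · exact hG.isAcyclic.induce {u}ᶜ

theorem IsBananaTree.canSupply {G : Multigraph V} (hG : G.IsBananaTree) (Y : V → ℕ) :
    G.CanSupply Y := by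
  refine Finite.induction_subsingleton_or_nontrivial
    (P := fun V => ∀ [Fintype V] (Y : V → ℕ) (G : Multigraph V), G.IsBananaTree → G.CanSupply Y)
    V (fun V _ _ _ Y G _ => canSupply_of_subsingleton G Y) (fun V _ _ ih _ Y G hG => ?_) Y G hG
  obtain ⟨u, w, hpendant, htree⟩ := hG.exists_isPendant
  exact hpendant.canSupply (fun Y' =>
    ih _ (Finite.card_subtype_lt (p := (· ≠ u)) (x := u) (by simp)) Y' _ htree) Y

end Multigraph

open Multigraph in
/-- Every banana tree of genus `g` has gonality at most `⌊(g+3)/2⌋`. -/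
theorem banana_tree_brill_noether_bound
    {V : Type} [Fintype V] (G : Multigraph V) (hG : G.IsBananaTree) :
    G.gonality ≤ (G.genus + 3) / 2 := by
  obtain ⟨D, hDeff, hD, hdeg⟩ := hG.canSupply 1
  have hbudget : G.demandBudget 1 = G.edgeCount - Fintype.card V + 4 := by
    simp [demandBudget, demandWeight]
  have hgon := G.gonality_le_toNat_degree hDeff hD.posRank
  unfold genus
  omega
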